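/- arXiv:1101.2558 — 12 statements merged into one kernel-verified Lean document; each statement's English description precedes it below -/
import Mathlib

section
/- Let α be a partial isometry of the chain {1,...,n} (an injective partial map such that |x−y| = |xα−yα| for all x,y in the domain) with |Im α| = p. Then the number of fixed points of α is 0, 1, or p. -/
/-- `f` is a partial isometry of the chain `Fin n` (injective partial map
preserving distances). -/
def IsPIso {n : ℕ} (f : Fin n → Option (Fin n)) : Prop :=
  (∀ x y a, f x = some a → f y = some a → x = y) ∧
  ∀ x y a b, f x = some a → f y = some b →
    ((x : ℤ) - (y : ℤ)).natAbs = ((a : ℤ) - (b : ℤ)).natAbs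

/-- `f` is order-decreasing. -/
def IsDecreasing {n : ℕ} (f : Fin n → Option (Fin n)) : Prop :=
  ∀ x a, f x = some a → (a : ℕ) ≤ (x : ℕ)

/-- `f` is order-preserving. -/
def IsOrderPreserving {n : ℕ} (f : Fin n → Option (Fin n)) : Prop :=
  ∀ x y a b, f x = some a → f y = some b → x ≤ y → a ≤ b

/-- `f` is order-reversing. -/
def IsOrderReversing {n : ℕ} (f : Fin n → Option (Fin n)) : Prop :=
  ∀ x y a b, f x = some a → f y = some b → x ≤ y → b ≤ a

/-- the height of `f`: the cardinality of its image. -/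
def imgCard {n : ℕ} (f : Fin n → Option (Fin n)) : ℕ :=
  (Finset.univ.filter fun y => ∃ x, f x = some y).card

/-- the number of fixed points of `f`. -/
def fixCard {n : ℕ} (f : Fin n → Option (Fin n)) : ℕ :=
  (Finset.univ.filter fun x => f x = some x).card

theorem fix_eq_zero_or_one_or_height {n p : ℕ} (f : Fin n → Option (Fin n))
    (hf : IsPIso f) (hp : imgCard f = p) :
    fixCard f = 0 ∨ fixCard f = 1 ∨ fixCard f = p := by
  by_cases h1 : fixCard f ≤ 1
  · interval_cases h : fixCard f <;> simp
  · right; right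
    push_neg at h1
    obtain ⟨u, hu, v, hv, huv⟩ := Finset.one_lt_card.mp h1
    simp only [Finset.mem_filter, Finset.mem_univ, true_and] at hu hv
    have hall : ∀ x c, f x = some c → c = x := by
      intro x c hc
      have h1 := hf.2 x u c u hc hu
      have h2 := hf.2 x v c v hc hv
      have huv' : (u : ℤ) ≠ (v : ℤ) := by
        exact fun h => huv (Fin.ext (by exact_mod_cast h))
      have := Int.natAbs_eq ((x : ℤ) - u)
      have := Int.natAbs_eq ((c : ℤ) - u)
      have := Int.natAbs_eq ((x : ℤ) - v)
      have := Int.natAbs_eq ((c : ℤ) - v)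
      have : (c : ℤ) = (x : ℤ) := by omega
      exact Fin.ext (by exact_mod_cast this)
    rw [← hp]
    unfold fixCard imgCard
    congr 1
    apply Finset.filter_congr
    intro y _
    constructor
    · intro hy; exact ⟨y, hy⟩
    · rintro ⟨x, hx⟩
      have := hall x y hx
      subst this; exact hx
end

section
/- Let α be a partial isometry of {1,...,n}. If α has more than one fixed point, then every element of its domain is fixed, i.e., α is a partial identity (hence an idempotent). -/
theorem partial_identity_of_two_fixed_points {n : ℕ} (f : Fin n → Option (Fin n))
    (hf : IsPIso f) (x₁ x₂ : Fin n) (hx₁ : f x₁ = some x₁) (hx₂ : f x₂ = some x₂)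
    (hne : x₁ ≠ x₂) :
    ∀ x a, f x = some a → a = x := by
  intro x a hx
  have h1 := hf.2 x x₁ a x₁ hx hx₁
  have h2 := hf.2 x x₂ a x₂ hx hx₂
  have hne' : (x₁ : ℤ) ≠ (x₂ : ℤ) := by
    simpa using fun h => hne (Fin.val_injective (by exact_mod_cast h))
  have : (a : ℤ) = (x : ℤ) := by omega
  exact Fin.val_injective (by exact_mod_cast this)
end

section
/- Let α be an order-decreasing partial isometry of {1,...,n}. If i is the unique fixed point of α, then Dom α ⊆ {i, i+1, ..., n}. -/
theorem dom_subset_of_unique_fixed_point {n : ℕ} (f : Fin n → Option (Fin n))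
    (hf : IsPIso f) (hd : IsDecreasing f) (i : Fin n) (hi : f i = some i)
    (huniq : ∀ x, f x = some x → x = i) :
    ∀ x, (f x).isSome → i ≤ x := by
  intro x hx
  obtain ⟨a, ha⟩ := Option.isSome_iff_exists.mp hx
  have h1 := hf.2 x i a i ha hi
  have h2 := hd x a ha
  by_contra hlt
  push_neg at hlt
  have hlt' : (x : ℕ) < (i : ℕ) := hlt
  have hax : a = x := by
    apply Fin.ext
    omega
  exact absurd (huniq x (hax ▸ ha)) (by omega)
end

section
/- Let α be a partial isometry of {1,...,n}. If 1 is a fixed point of α, or n is a fixed point of α, then α is a partial identity. -/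
theorem partial_identity_of_endpoint_fixed {n : ℕ} (hn : 0 < n)
    (f : Fin n → Option (Fin n)) (hf : IsPIso f)
    (hfix : f ⟨0, hn⟩ = some ⟨0, hn⟩ ∨
      f ⟨n - 1, by omega⟩ = some ⟨n - 1, by omega⟩) :
    ∀ x a, f x = some a → a = x := by
  intro x a hxa
  rcases hfix with h | h
  · have := hf.2 x ⟨0, hn⟩ a ⟨0, hn⟩ hxa h
    have hx := x.isLt; have ha := a.isLt
    simp only at this
    exact Fin.ext (by omega)
  · have := hf.2 x ⟨n - 1, by omega⟩ a ⟨n - 1, by omega⟩ hxa h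
    have hx := x.isLt; have ha := a.isLt
    simp only at this
    exact Fin.ext (by omega)
end

section
/- Let α be an order-preserving partial isometry of {1,...,n} with at least one fixed point. Then α is a partial identity (equivalently, an idempotent). -/
theorem partial_identity_of_fixed_point_orderPreserving {n : ℕ}
    (f : Fin n → Option (Fin n)) (hf : IsPIso f) (hop : IsOrderPreserving f)
    (hfix : ∃ x, f x = some x) :
    ∀ x a, f x = some a → a = x := by
  obtain ⟨x0, h0⟩ := hfix
  intro x a hxa
  have hd := hf.2 x x0 a x0 hxa h0
  rcases le_total x x0 with h | h
  · have ha : a ≤ x0 := hop x x0 a x0 hxa h0 h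
    have h1 : (x : ℕ) ≤ (x0 : ℕ) := h
    have h2 : (a : ℕ) ≤ (x0 : ℕ) := ha
    exact Fin.ext (by omega)
  · have ha : x0 ≤ a := hop x0 x x0 a h0 hxa h
    have h1 : (x0 : ℕ) ≤ (x : ℕ) := h
    have h2 : (x0 : ℕ) ≤ (a : ℕ) := ha
    exact Fin.ext (by omega)
end

section
/- For n ≥ p ≥ 2, the number F(n;p) of order-preserving order-decreasing partial isometries of {1,...,n} of height p satisfies the recurrence F(n;p) = F(n−1;p−1) + F(n−1;p). -/
/-- `F n p` : the number of order-preserving order-decreasing partial isometries of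
the chain `Fin n` of height `p`. -/
noncomputable def F (n p : ℕ) : ℕ :=
  Nat.card {f : Fin n → Option (Fin n) //
    IsPIso f ∧ IsOrderPreserving f ∧ IsDecreasing f ∧ imgCard f = p}

/-! ### Auxiliary definitions -/

abbrev Tset (n p : ℕ) := {f : Fin n → Option (Fin n) //
    IsPIso f ∧ IsOrderPreserving f ∧ IsDecreasing f ∧ imgCard f = p}

/-- pairs (domain, shift). -/
abbrev PairSet (n p : ℕ) := {q : Finset (Fin n) × Fin n // q.1.card = p ∧ ∀ a ∈ q.1, q.2 ≤ a}

/-- the map from pairs to partial maps : `x ↦ x - d` on `A`. -/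
def phi {n p : ℕ} (q : PairSet n p) : Fin n → Option (Fin n) := fun x =>
  if x ∈ q.1.1 then some ⟨x.val - q.1.2.val, lt_of_le_of_lt (Nat.sub_le _ _) x.isLt⟩ else none

lemma phi_eq_some {n p : ℕ} (q : PairSet n p) (x a : Fin n) :
    phi q x = some a ↔ x ∈ q.1.1 ∧ (a : ℕ) + (q.1.2 : ℕ) = (x : ℕ) := by
  unfold phi
  split
  · rename_i h
    have hd : (q.1.2 : ℕ) ≤ (x : ℕ) := q.2.2 x h
    simp only [Option.some.injEq]
    constructor
    · rintro rfl; exact ⟨h, by simp; omega⟩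
    · rintro ⟨-, h2⟩; apply Fin.ext; simp; omega
  · simp_all

lemma phi_spec {n p : ℕ} (q : PairSet n p) :
    IsPIso (phi q) ∧ IsOrderPreserving (phi q) ∧ IsDecreasing (phi q) ∧ imgCard (phi q) = p := by
  refine ⟨⟨?_, ?_⟩, ?_, ?_, ?_⟩
  · intro x y a hx hy
    rw [phi_eq_some] at hx hy
    apply Fin.ext; omega
  · intro x y a b hx hy
    rw [phi_eq_some] at hx hy
    omega
  · intro x y a b hx hy hxy
    rw [phi_eq_some] at hx hy
    rw [Fin.le_def] at *
    omega
  · intro x a hx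
    rw [phi_eq_some] at hx
    omega
  · rw [imgCard]
    refine Eq.trans ?_ q.2.1
    symm
    apply Finset.card_bij (fun (x : Fin n) _ => (⟨(x : ℕ) - (q.1.2 : ℕ),
        lt_of_le_of_lt (Nat.sub_le _ _) x.isLt⟩ : Fin n))
    · intro x hx
      simp only [Finset.mem_filter, Finset.mem_univ, true_and]
      exact ⟨x, by rw [phi_eq_some]; exact ⟨hx, by have := q.2.2 x hx; rw [Fin.le_def] at this; simp; omega⟩⟩
    · intro x1 h1 x2 h2 he
      have d1 := q.2.2 x1 h1
      have d2 := q.2.2 x2 h2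
      rw [Fin.le_def] at d1 d2
      have := congrArg Fin.val he
      simp at this
      apply Fin.ext; omega
    · intro b hb
      simp only [Finset.mem_filter, Finset.mem_univ, true_and] at hb
      obtain ⟨x, hx⟩ := hb
      rw [phi_eq_some] at hx
      exact ⟨x, hx.1, Fin.ext (by simp; omega)⟩

/-- the common shift of an order-preserving decreasing partial isometry. -/
lemma shift_const {n : ℕ} {f : Fin n → Option (Fin n)} (hiso : IsPIso f)
    (hord : IsOrderPreserving f) (hdec : IsDecreasing f) {x y a b : Fin n}
    (hx : f x = some a) (hy : f y = some b) :
    (x : ℕ) - (a : ℕ) = (y : ℕ) - (b : ℕ) ∧ (a : ℕ) ≤ (x : ℕ) := by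
  have hax := hdec x a hx
  have hby := hdec y b hy
  have hab := hiso.2 x y a b hx hy
  rcases le_total x y with h | h
  · have := hord x y a b hx hy h
    rw [Fin.le_def] at this h
    refine ⟨by omega, hax⟩
  · have := hord y x b a hy hx h
    rw [Fin.le_def] at this h
    refine ⟨by omega, hax⟩

lemma phi_bijective {n p : ℕ} (hp : 1 ≤ p) :
    Function.Bijective (fun q : PairSet n p => (⟨phi q, phi_spec q⟩ : Tset n p)) := by
  constructor
  · rintro ⟨⟨A, d⟩, hA, hd⟩ ⟨⟨A', d'⟩, hA', hd'⟩ h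
    simp only [Subtype.mk.injEq] at h
    have hAA : A = A' := by
      ext x
      constructor
      · intro hx
        have h1 : phi (⟨⟨A, d⟩, hA, hd⟩ : PairSet n p) x =
            some ⟨(x : ℕ) - (d : ℕ), lt_of_le_of_lt (Nat.sub_le _ _) x.isLt⟩ := by
          unfold phi; simp [hx]
        have h2 := (congrFun h x).symm.trans h1
        rw [phi_eq_some] at h2
        exact h2.1
      · intro hx
        have h1 : phi (⟨⟨A', d'⟩, hA', hd'⟩ : PairSet n p) x =
            some ⟨(x : ℕ) - (d' : ℕ), lt_of_le_of_lt (Nat.sub_le _ _) x.isLt⟩ := by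
          unfold phi; simp [hx]
        have h2 := (congrFun h x).trans h1
        rw [phi_eq_some] at h2
        exact h2.1
    subst hAA
    have hA2 : A.card = p := hA
    have hne : A.Nonempty := Finset.card_pos.mp (by omega)
    obtain ⟨x0, hx0⟩ := hne
    have h1 : phi (⟨⟨A, d⟩, hA, hd⟩ : PairSet n p) x0 =
        some ⟨(x0 : ℕ) - (d : ℕ), lt_of_le_of_lt (Nat.sub_le _ _) x0.isLt⟩ := by
      unfold phi; simp [hx0]
    have h2 := (congrFun h x0).symm.trans h1
    rw [phi_eq_some] at h2
    have hdx : (d : ℕ) ≤ (x0 : ℕ) := Fin.le_def.mp (hd x0 hx0)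
    have hdx' : (d' : ℕ) ≤ (x0 : ℕ) := Fin.le_def.mp (hd' x0 hx0)
    obtain ⟨-, h2⟩ := h2
    simp only [Fin.val_mk] at h2
    have hdd : d = d' := Fin.ext (by omega)
    subst hdd
    rfl
  · rintro ⟨f, hiso, hord, hdec, himg⟩
    classical
    set A := Finset.univ.filter (fun x => (f x).isSome) with hAdef
    have hcardA : A.card = p := by
      rw [← himg, imgCard]
      apply Finset.card_bij (fun (x : Fin n) hx => (f x).get (by
        simpa [hAdef] using hx))
      · intro x hx
        simp only [Finset.mem_filter, Finset.mem_univ, true_and]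
        exact ⟨x, Option.eq_some_of_isSome _⟩
      · intro x1 h1 x2 h2 he
        exact hiso.1 x1 x2 _ (by rw [← he]; exact (Option.some_get _).symm)
          (Option.some_get _).symm
      · intro b hb
        simp only [Finset.mem_filter, Finset.mem_univ, true_and] at hb
        obtain ⟨x, hx⟩ := hb
        refine ⟨x, by simp [hAdef, hx], ?_⟩
        simp [hx]
    have hne : A.Nonempty := Finset.card_pos.mp (by omega)
    obtain ⟨x0, hx0⟩ := hne
    have hs0 : (f x0).isSome := by simpa [hAdef] using hx0
    obtain ⟨b0, hb0⟩ := Option.isSome_iff_exists.mp hs0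
    have hb0x : (b0 : ℕ) ≤ (x0 : ℕ) := hdec x0 b0 hb0
    have hdn : (x0 : ℕ) - (b0 : ℕ) < n := lt_of_le_of_lt (Nat.sub_le _ _) x0.isLt
    refine ⟨⟨⟨A, ⟨(x0 : ℕ) - (b0 : ℕ), hdn⟩⟩, hcardA, ?_⟩, ?_⟩
    · intro a ha
      have hsa : (f a).isSome := by simpa [hAdef] using ha
      obtain ⟨c, hc⟩ := Option.isSome_iff_exists.mp hsa
      have := shift_const hiso hord hdec hc hb0
      rw [Fin.le_def]
      simp
      omega
    · apply Subtype.ext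
      show phi _ = f
      funext x
      by_cases hx : x ∈ A
      · have hsx : (f x).isSome := by simpa [hAdef] using hx
        obtain ⟨c, hc⟩ := Option.isSome_iff_exists.mp hsx
        rw [hc, phi_eq_some]
        have := shift_const hiso hord hdec hc hb0
        simp
        exact ⟨hx, by omega⟩
      · have hsx : f x = none := by
          simp [hAdef] at hx
          exact Option.not_isSome_iff_eq_none.mp (by simp [hx])
        rw [hsx]
        unfold phi
        simp [hx]

lemma card_T_eq {n p : ℕ} (hp : 1 ≤ p) :
    Nat.card (Tset n p) = Nat.card (PairSet n p) :=
  (Nat.card_eq_of_bijective _ (phi_bijective hp)).symm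

/-- the splitting map for the recurrence. -/
def psi {n p : ℕ} (hp : 1 ≤ p) :
    PairSet n (p - 1) ⊕ PairSet n p → PairSet (n + 1) p
  | .inl ⟨⟨A, d⟩, hA, hd⟩ =>
      ⟨⟨insert (Fin.last n) (A.map Fin.castSuccEmb), d.castSucc⟩, by
        constructor
        · rw [Finset.card_insert_of_notMem, Finset.card_map]
          · have : A.card = p - 1 := hA
            omega
          · simp only [Finset.mem_map]
            rintro ⟨a, -, ha⟩
            exact absurd ha (Fin.castSucc_lt_last a).ne
        · intro a ha
          rcases Finset.mem_insert.mp ha with rfl | ha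
          · exact Fin.le_last _
          · obtain ⟨b, hb, rfl⟩ := Finset.mem_map.mp ha
            exact Fin.castSucc_le_castSucc_iff.mpr (hd b hb)⟩
  | .inr ⟨⟨A, d⟩, hA, hd⟩ =>
      ⟨⟨A.map Fin.castSuccEmb, d.castSucc⟩, by
        constructor
        · rw [Finset.card_map]; exact hA
        · intro a ha
          obtain ⟨b, hb, rfl⟩ := Finset.mem_map.mp ha
          exact Fin.castSucc_le_castSucc_iff.mpr (hd b hb)⟩

lemma psi_bijective {n p : ℕ} (hp : 2 ≤ p) :
    Function.Bijective (psi (n := n) (p := p) (by omega)) := by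
  classical
  constructor
  · rintro (⟨⟨A, d⟩, hA, hd⟩ | ⟨⟨A, d⟩, hA, hd⟩) (⟨⟨A', d'⟩, hA', hd'⟩ | ⟨⟨A', d'⟩, hA', hd'⟩) h <;>
      simp only [psi, Subtype.mk.injEq, Prod.mk.injEq] at h
    · obtain ⟨h1, h2⟩ := h
      have hnm : Fin.last n ∉ A.map Fin.castSuccEmb := by
        simp only [Finset.mem_map]
        rintro ⟨a, -, ha⟩
        exact absurd ha (Fin.castSucc_lt_last a).ne
      have hnm' : Fin.last n ∉ A'.map Fin.castSuccEmb := by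
        simp only [Finset.mem_map]
        rintro ⟨a, -, ha⟩
        exact absurd ha (Fin.castSucc_lt_last a).ne
      have hAA : A = A' := by
        apply Finset.map_injective Fin.castSuccEmb
        have := congrArg (fun s => Finset.erase s (Fin.last n)) h1
        simpa [Finset.erase_insert hnm, Finset.erase_insert hnm'] using this
      have hdd : d = d' := Fin.castSucc_injective _ h2
      simp [hAA, hdd]
    · exfalso
      have : Fin.last n ∈ A'.map Fin.castSuccEmb := h.1 ▸ Finset.mem_insert_self _ _
      simp only [Finset.mem_map] at this
      obtain ⟨a, -, ha⟩ := this
      exact absurd ha (Fin.castSucc_lt_last a).ne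
    · exfalso
      have : Fin.last n ∈ A.map Fin.castSuccEmb := h.1 ▸ Finset.mem_insert_self _ _
      simp only [Finset.mem_map] at this
      obtain ⟨a, -, ha⟩ := this
      exact absurd ha (Fin.castSucc_lt_last a).ne
    · obtain ⟨h1, h2⟩ := h
      have hAA : A = A' := Finset.map_injective Fin.castSuccEmb h1
      have hdd : d = d' := Fin.castSucc_injective _ h2
      simp [hAA, hdd]
  · rintro ⟨⟨B, d⟩, hB, hd⟩
    have hB2 : B.card = p := hB
    -- there is an element of B different from the last element
    have hex : ∃ b ∈ B, b ≠ Fin.last n := by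
      by_cases hl : Fin.last n ∈ B
      · have : 1 ≤ (B.erase (Fin.last n)).card := by
          rw [Finset.card_erase_of_mem hl]; omega
        obtain ⟨b, hb⟩ := Finset.card_pos.mp
          (show 0 < (B.erase (Fin.last n)).card by omega)
        exact ⟨b, (Finset.mem_erase.mp hb).2, (Finset.mem_erase.mp hb).1⟩
      · obtain ⟨b, hb⟩ := Finset.card_pos.mp (show 0 < B.card by omega)
        exact ⟨b, hb, fun h => hl (h ▸ hb)⟩
    obtain ⟨b, hbB, hbl⟩ := hex
    have hbn : (b : ℕ) < n := by
      have := b.isLt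
      have : (b : ℕ) ≠ n := fun h => hbl (Fin.ext (by simp [h, Fin.last]))
      omega
    have hdn : (d : ℕ) < n := lt_of_le_of_lt (Fin.le_def.mp (hd b hbB)) hbn
    set A : Finset (Fin n) := Finset.univ.filter (fun a => a.castSucc ∈ B) with hAdef
    have hmap : A.map Fin.castSuccEmb = B.erase (Fin.last n) := by
      ext c
      simp only [Finset.mem_map, Finset.mem_erase, hAdef, Finset.mem_filter, Finset.mem_univ,
        true_and]
      constructor
      · rintro ⟨a, ha, rfl⟩
        exact ⟨(Fin.castSucc_lt_last a).ne, ha⟩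
      · rintro ⟨hc, hcB⟩
        obtain ⟨a, rfl⟩ := Fin.exists_castSucc_eq.mpr hc
        exact ⟨a, hcB, rfl⟩
    have hdcond : ∀ a ∈ A, (⟨(d : ℕ), hdn⟩ : Fin n) ≤ a := by
      intro a ha
      rw [hAdef, Finset.mem_filter] at ha
      have := Fin.le_def.mp (hd a.castSucc ha.2)
      rw [Fin.le_def]
      simpa using this
    have hcast : (⟨(d : ℕ), hdn⟩ : Fin n).castSucc = d := Fin.ext rfl
    by_cases hl : Fin.last n ∈ B
    · refine ⟨.inl ⟨⟨A, ⟨(d : ℕ), hdn⟩⟩, ?_, hdcond⟩, ?_⟩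
      · have : A.card = (B.erase (Fin.last n)).card := by rw [← hmap, Finset.card_map]
        rw [this, Finset.card_erase_of_mem hl, hB2]
      · simp only [psi]
        apply Subtype.ext
        simp only [Prod.mk.injEq]
        refine ⟨?_, hcast⟩
        rw [hmap, Finset.insert_erase hl]
    · refine ⟨.inr ⟨⟨A, ⟨(d : ℕ), hdn⟩⟩, ?_, hdcond⟩, ?_⟩
      · have : A.card = (B.erase (Fin.last n)).card := by rw [← hmap, Finset.card_map]
        rw [this, Finset.erase_eq_of_notMem hl, hB2]
      · simp only [psi]
        apply Subtype.ext
        simp only [Prod.mk.injEq]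
        refine ⟨?_, hcast⟩
        rw [hmap, Finset.erase_eq_of_notMem hl]

theorem F_recurrence (n p : ℕ) (h2 : 2 ≤ p) (hpn : p ≤ n) :
    F n p = F (n - 1) (p - 1) + F (n - 1) p := by
  obtain ⟨m, rfl⟩ : ∃ m, n = m + 1 := ⟨n - 1, by omega⟩
  simp only [Nat.add_sub_cancel]
  show Nat.card (Tset (m + 1) p) = Nat.card (Tset m (p - 1)) + Nat.card (Tset m p)
  rw [card_T_eq (by omega), card_T_eq (by omega : 1 ≤ p - 1), card_T_eq (by omega : 1 ≤ p)]
  rw [← Nat.card_sum]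
  exact (Nat.card_eq_of_bijective _ (psi_bijective h2)).symm
end

section
/- For n ≥ p ≥ 1, the number of order-preserving order-decreasing partial isometries of {1,...,n} with image of size exactly p equals the binomial coefficient C(n+1, p+1). -/
namespace FProof

open Finset

/-- minimum of a finset of naturals (junk `0` if empty). -/
noncomputable def mn (S : Finset ℕ) : ℕ := sInf {x | x ∈ S}

lemma mn_mem {S : Finset ℕ} (h : S.Nonempty) : mn S ∈ S := by
  have : ({x | x ∈ S} : Set ℕ).Nonempty := ⟨h.choose, h.choose_spec⟩
  exact Nat.sInf_mem this

lemma mn_le {S : Finset ℕ} {a : ℕ} (h : a ∈ S) : mn S ≤ a := Nat.sInf_le h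

lemma mn_eq {S : Finset ℕ} {m : ℕ} (hm : m ∈ S) (hlb : ∀ a ∈ S, m ≤ a) : mn S = m :=
  le_antisymm (mn_le hm) (hlb _ (mn_mem ⟨m, hm⟩))

variable {n p : ℕ}

/-- the domain of `f`. -/
def dm (f : Fin n → Option (Fin n)) : Finset (Fin n) :=
  Finset.univ.filter fun x => (f x).isSome

/-- the domain of `f`, shifted up by one, as naturals. -/
def dmN (f : Fin n → Option (Fin n)) : Finset ℕ :=
  (dm f).image (fun x : Fin n => (x : ℕ) + 1)

/-- the image of `f` as naturals. -/
def imgN (f : Fin n → Option (Fin n)) : Finset ℕ :=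
  (Finset.univ.filter fun y => ∃ x, f x = some y).image Fin.val

/-- encoding of `f` as a finite set of naturals. -/
noncomputable def enc (f : Fin n → Option (Fin n)) : Finset ℕ := insert (mn (imgN f)) (dmN f)

/-- decoding a finite set of naturals to a partial map. -/
noncomputable def dec (n : ℕ) (S : Finset ℕ) : Fin n → Option (Fin n) := fun x =>
  if h : (x : ℕ) + 1 ∈ S.erase (mn S) then
    some ⟨(x : ℕ) + 1 + mn S - mn (S.erase (mn S)), by
      have h1 : mn (S.erase (mn S)) ∈ S.erase (mn S) := mn_mem ⟨_, h⟩
      have h2 : mn S ≤ mn (S.erase (mn S)) := mn_le (Finset.mem_of_mem_erase h1)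
      have h3 : mn (S.erase (mn S)) ≠ mn S := Finset.ne_of_mem_erase h1
      have h4 : mn (S.erase (mn S)) ≤ (x : ℕ) + 1 := mn_le h
      have h5 := x.isLt
      omega⟩
  else none

lemma dec_spec (S : Finset ℕ) (x : Fin n) (h : (x : ℕ) + 1 ∈ S.erase (mn S)) :
    ∃ a, dec n S x = some a ∧ (a : ℕ) = (x : ℕ) + 1 + mn S - mn (S.erase (mn S)) := by
  simp only [dec, dif_pos h]
  exact ⟨_, rfl, rfl⟩

lemma dec_none {S : Finset ℕ} {x : Fin n} (h : (x : ℕ) + 1 ∉ S.erase (mn S)) :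
    dec n S x = none := dif_neg h

lemma dec_val {S : Finset ℕ} {x a : Fin n} (h : dec n S x = some a) :
    (x : ℕ) + 1 ∈ S.erase (mn S) ∧
      (a : ℕ) = (x : ℕ) + 1 + mn S - mn (S.erase (mn S)) := by
  by_cases hx : (x : ℕ) + 1 ∈ S.erase (mn S)
  · obtain ⟨b, hb, hbv⟩ := dec_spec S x hx
    rw [hb] at h
    obtain rfl := Option.some_inj.mp h
    exact ⟨hx, hbv⟩
  · rw [dec_none hx] at h; cases h

section Forward

variable {f : Fin n → Option (Fin n)}

lemma shift (hI : IsPIso f) (hO : IsOrderPreserving f) {x y a b : Fin n}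
    (hx : f x = some a) (hy : f y = some b) :
    (x : ℕ) + (b : ℕ) = (y : ℕ) + (a : ℕ) := by
  have h := hI.2 x y a b hx hy
  have h1 : (x : ℕ) ≤ (y : ℕ) → (a : ℕ) ≤ (b : ℕ) := fun hle => hO x y a b hx hy hle
  have h2 : (y : ℕ) ≤ (x : ℕ) → (b : ℕ) ≤ (a : ℕ) := fun hle => hO y x b a hy hx hle
  omega

lemma card_dm (hI : IsPIso f) : (dm f).card = imgCard f := by
  rw [imgCard]
  apply Finset.card_bij (fun x hx => Option.get (f x)
    (by simpa [dm] using hx))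
  · intro x hx
    simp only [mem_filter, mem_univ, true_and]
    exact ⟨x, (Option.some_get _).symm⟩
  · intro x₁ h₁ x₂ h₂ hE
    have e₁ : f x₁ = some ((f x₁).get (by simpa [dm] using h₁)) := (Option.some_get _).symm
    have e₂ : f x₂ = some ((f x₂).get (by simpa [dm] using h₂)) := (Option.some_get _).symm
    exact hI.1 x₁ x₂ _ (e₁.trans (congrArg some hE)) e₂
  · intro b hb
    obtain ⟨x, hx⟩ := (mem_filter.mp hb).2
    refine ⟨x, by simp [dm, hx], ?_⟩
    simp [hx]

lemma card_dmN : (dmN f).card = (dm f).card :=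
  Finset.card_image_of_injective _ (fun a b h => Fin.val_injective (Nat.succ_injective h))

lemma dm_nonempty (himg : imgCard f = p) (hp : 1 ≤ p) : (dm f).Nonempty := by
  have h : 0 < (Finset.univ.filter fun y => ∃ x, f x = some y).card := by
    rw [show (Finset.univ.filter fun y => ∃ x, f x = some y).card = imgCard f from rfl, himg]
    omega
  obtain ⟨y, hy⟩ := Finset.card_pos.mp h
  obtain ⟨x, hx⟩ := (mem_filter.mp hy).2
  exact ⟨x, by simp [dm, hx]⟩

lemma mem_dmN {c : ℕ} : c ∈ dmN f ↔ ∃ x : Fin n, (f x).isSome ∧ (x : ℕ) + 1 = c := by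
  simp [dmN, dm]

lemma min_dom (hO : IsOrderPreserving f) (hne : (dm f).Nonempty) :
    ∃ x₀ a₀ : Fin n, f x₀ = some a₀ ∧ (x₀ : ℕ) + 1 = mn (dmN f) ∧
      (a₀ : ℕ) = mn (imgN f) := by
  have hdne : (dmN f).Nonempty := hne.image _
  obtain ⟨x₀, hx₀s, hx₀v⟩ := mem_dmN.mp (mn_mem hdne)
  obtain ⟨a₀, ha₀⟩ := Option.isSome_iff_exists.mp hx₀s
  refine ⟨x₀, a₀, ha₀, hx₀v, ?_⟩
  refine (mn_eq ?_ ?_).symm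
  · exact Finset.mem_image.mpr ⟨a₀, mem_filter.mpr ⟨mem_univ _, ⟨x₀, ha₀⟩⟩, rfl⟩
  · intro b hb
    obtain ⟨c, hc, rfl⟩ := Finset.mem_image.mp hb
    obtain ⟨y, hy⟩ := (mem_filter.mp hc).2
    have hxy : (x₀ : ℕ) + 1 ≤ (y : ℕ) + 1 := by
      rw [hx₀v]
      exact mn_le (mem_dmN.mpr ⟨y, by simp [hy], rfl⟩)
    exact hO x₀ y a₀ c ha₀ hy (by omega)

lemma mn_notMem_dmN (hO : IsOrderPreserving f) (hD : IsDecreasing f)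
    (hne : (dm f).Nonempty) : mn (imgN f) ∉ dmN f := by
  obtain ⟨x₀, a₀, hx₀, _, ha₀⟩ := min_dom hO hne
  intro hmem
  obtain ⟨x, hxs, hxv⟩ := mem_dmN.mp hmem
  obtain ⟨b, hb⟩ := Option.isSome_iff_exists.mp hxs
  -- mn (imgN f) = a₀ ≤ x₀, but also ≤ every image value; contradiction with = x+1
  have h1 : mn (imgN f) ≤ (b : ℕ) := by
    exact mn_le (Finset.mem_image.mpr ⟨b, mem_filter.mpr ⟨mem_univ _, ⟨x, hb⟩⟩, rfl⟩)
  have h2 : (b : ℕ) ≤ (x : ℕ) := hD x b hb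
  omega

lemma mn_enc (hO : IsOrderPreserving f) (hD : IsDecreasing f)
    (hne : (dm f).Nonempty) : mn (enc f) = mn (imgN f) := by
  apply mn_eq (Finset.mem_insert_self _ _)
  intro c hc
  rcases Finset.mem_insert.mp hc with rfl | hc
  · exact le_rfl
  · obtain ⟨x, hxs, rfl⟩ := mem_dmN.mp hc
    obtain ⟨b, hb⟩ := Option.isSome_iff_exists.mp hxs
    have h1 : mn (imgN f) ≤ (b : ℕ) :=
      mn_le (Finset.mem_image.mpr ⟨b, mem_filter.mpr ⟨mem_univ _, ⟨x, hb⟩⟩, rfl⟩)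
    have h2 : (b : ℕ) ≤ (x : ℕ) := hD x b hb
    omega

lemma enc_erase (hO : IsOrderPreserving f) (hD : IsDecreasing f)
    (hne : (dm f).Nonempty) : (enc f).erase (mn (enc f)) = dmN f := by
  rw [mn_enc hO hD hne, enc, Finset.erase_insert (mn_notMem_dmN hO hD hne)]

lemma enc_mem (hI : IsPIso f) (hO : IsOrderPreserving f) (hD : IsDecreasing f)
    (himg : imgCard f = p) (hp : 1 ≤ p) :
    enc f ∈ Finset.powersetCard (p + 1) (Finset.range (n + 1)) := by
  have hne := dm_nonempty himg hp
  obtain ⟨x₀, a₀, hx₀, hdN, ha₀⟩ := min_dom hO hne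
  rw [Finset.mem_powersetCard]
  constructor
  · intro c hc
    rcases Finset.mem_insert.mp hc with rfl | hc
    · rw [← ha₀]
      exact Finset.mem_range.mpr (by have := a₀.isLt; omega)
    · obtain ⟨x, _, rfl⟩ := mem_dmN.mp hc
      exact Finset.mem_range.mpr (by have := x.isLt; omega)
  · rw [enc, Finset.card_insert_of_notMem (mn_notMem_dmN hO hD hne),
      card_dmN, card_dm hI, himg]

lemma round1 (hI : IsPIso f) (hO : IsOrderPreserving f) (hD : IsDecreasing f)
    (himg : imgCard f = p) (hp : 1 ≤ p) : dec n (enc f) = f := by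
  have hne := dm_nonempty himg hp
  obtain ⟨x₀, a₀, hx₀, hdN, ha₀⟩ := min_dom hO hne
  funext x
  by_cases hx : (f x).isSome
  · obtain ⟨b, hb⟩ := Option.isSome_iff_exists.mp hx
    have hx1 : (x : ℕ) + 1 ∈ (enc f).erase (mn (enc f)) := by
      rw [enc_erase hO hD hne]
      exact mem_dmN.mpr ⟨x, hx, rfl⟩
    obtain ⟨a, ha, hav⟩ := dec_spec (enc f) x hx1
    rw [ha, hb]
    congr 1
    apply Fin.val_injective
    rw [hav, enc_erase hO hD hne, mn_enc hO hD hne]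
    have hsh := shift hI hO hx₀ hb
    have hxx : (x₀ : ℕ) + 1 ≤ (x : ℕ) + 1 := by
      rw [hdN]; exact mn_le (mem_dmN.mpr ⟨x, hx, rfl⟩)
    omega
  · rw [Option.not_isSome_iff_eq_none] at hx
    rw [hx]
    apply dec_none
    rw [enc_erase hO hD hne]
    intro hmem
    obtain ⟨y, hys, hyv⟩ := mem_dmN.mp hmem
    have : y = x := Fin.val_injective (by omega)
    rw [this, hx] at hys
    simp at hys

end Forward

section Backward

variable {S : Finset ℕ}

lemma dec_dm_mem {x : Fin n} : x ∈ dm (dec n S) ↔ (x : ℕ) + 1 ∈ S.erase (mn S) := by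
  rw [dm, mem_filter]
  simp only [mem_univ, true_and]
  constructor
  · intro h
    obtain ⟨a, ha⟩ := Option.isSome_iff_exists.mp h
    exact (dec_val ha).1
  · intro h
    obtain ⟨a, ha, _⟩ := dec_spec S x h
    rw [ha]; rfl

lemma S_facts (hS : S ∈ Finset.powersetCard (p + 1) (Finset.range (n + 1)))
    (hp : 1 ≤ p) :
    (∀ c ∈ S, c ≤ n) ∧ S.card = p + 1 ∧ mn S ∈ S ∧ (S.erase (mn S)).card = p ∧
      (S.erase (mn S)).Nonempty ∧ mn S < mn (S.erase (mn S)) := by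
  rw [Finset.mem_powersetCard] at hS
  have hsub : ∀ c ∈ S, c ≤ n := fun c hc => by
    have := Finset.mem_range.mp (hS.1 hc); omega
  have hcard := hS.2
  have hmem : mn S ∈ S := mn_mem (Finset.card_pos.mp (by omega))
  have hec : (S.erase (mn S)).card = p := by
    rw [Finset.card_erase_of_mem hmem, hcard]
    omega
  have hene : (S.erase (mn S)).Nonempty := Finset.card_pos.mp (by omega)
  have hlt : mn S < mn (S.erase (mn S)) := by
    have h1 := mn_mem hene
    have h2 : mn S ≤ mn (S.erase (mn S)) := mn_le (Finset.mem_of_mem_erase h1)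
    have h3 := Finset.ne_of_mem_erase h1
    omega
  exact ⟨hsub, hcard, hmem, hec, hene, hlt⟩

lemma dec_props (hS : S ∈ Finset.powersetCard (p + 1) (Finset.range (n + 1)))
    (hp : 1 ≤ p) (hpn : p ≤ n) :
    IsPIso (dec n S) ∧ IsOrderPreserving (dec n S) ∧ IsDecreasing (dec n S) ∧
      imgCard (dec n S) = p := by
  obtain ⟨hsub, hcard, hmem, hec, hene, hlt⟩ := S_facts hS hp
  have hm'le : ∀ x : Fin n, ∀ a : Fin n, dec n S x = some a →
      mn (S.erase (mn S)) ≤ (x : ℕ) + 1 ∧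
        (a : ℕ) = (x : ℕ) + 1 + mn S - mn (S.erase (mn S)) := by
    intro x a h
    obtain ⟨h1, h2⟩ := dec_val h
    exact ⟨mn_le h1, h2⟩
  have hI : IsPIso (dec n S) := by
    constructor
    · intro x y a hx hy
      obtain ⟨hx1, hx2⟩ := hm'le x a hx
      obtain ⟨hy1, hy2⟩ := hm'le y a hy
      exact Fin.val_injective (by omega)
    · intro x y a b hx hy
      obtain ⟨hx1, hx2⟩ := hm'le x a hx
      obtain ⟨hy1, hy2⟩ := hm'le y b hy
      omega
  have hO : IsOrderPreserving (dec n S) := by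
    intro x y a b hx hy hxy
    obtain ⟨hx1, hx2⟩ := hm'le x a hx
    obtain ⟨hy1, hy2⟩ := hm'le y b hy
    have : (x : ℕ) ≤ (y : ℕ) := hxy
    show (a : ℕ) ≤ (b : ℕ)
    omega
  have hD : IsDecreasing (dec n S) := by
    intro x a hx
    obtain ⟨hx1, hx2⟩ := hm'le x a hx
    omega
  refine ⟨hI, hO, hD, ?_⟩
  have hdmN : dmN (dec n S) = S.erase (mn S) := by
    ext c
    rw [mem_dmN]
    constructor
    · rintro ⟨x, hxs, rfl⟩
      exact dec_dm_mem.mp (by simp [dm, hxs])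
    · intro hc
      have hc1 : 1 ≤ c := by
        have := mn_le hc
        omega
      have hc2 : c ≤ n := hsub c (Finset.mem_of_mem_erase hc)
      refine ⟨⟨c - 1, by omega⟩, ?_, by show c - 1 + 1 = c; omega⟩
      have hx : ((⟨c - 1, by omega⟩ : Fin n) : ℕ) + 1 ∈ S.erase (mn S) := by
        simpa [Nat.sub_add_cancel hc1] using hc
      obtain ⟨a, ha, _⟩ := dec_spec S _ hx
      rw [ha]; rfl
  rw [← card_dm hI, ← card_dmN, hdmN, hec]

lemma round2 (hS : S ∈ Finset.powersetCard (p + 1) (Finset.range (n + 1)))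
    (hp : 1 ≤ p) (hpn : p ≤ n) : enc (dec n S) = S := by
  obtain ⟨hsub, hcard, hmem, hec, hene, hlt⟩ := S_facts hS hp
  have hdmN : dmN (dec n S) = S.erase (mn S) := by
    ext c
    rw [mem_dmN]
    constructor
    · rintro ⟨x, hxs, rfl⟩
      exact dec_dm_mem.mp (by simp [dm, hxs])
    · intro hc
      have hc1 : 1 ≤ c := by
        have := mn_le hc
        omega
      have hc2 : c ≤ n := hsub c (Finset.mem_of_mem_erase hc)
      refine ⟨⟨c - 1, by omega⟩, ?_, by show c - 1 + 1 = c; omega⟩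
      have hx : ((⟨c - 1, by omega⟩ : Fin n) : ℕ) + 1 ∈ S.erase (mn S) := by
        simpa [Nat.sub_add_cancel hc1] using hc
      obtain ⟨a, ha, _⟩ := dec_spec S _ hx
      rw [ha]; rfl
  have himgN : mn (imgN (dec n S)) = mn S := by
    apply mn_eq
    · -- mn S is attained as the value at ⟨mn (S.erase (mn S)) - 1⟩
      have hm'1 : 1 ≤ mn (S.erase (mn S)) := by omega
      have hm'n : mn (S.erase (mn S)) ≤ n :=
        hsub _ (Finset.mem_of_mem_erase (mn_mem hene))
      have hn1 : 1 ≤ n := le_trans hp hpn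
      set x : Fin n := ⟨mn (S.erase (mn S)) - 1, by omega⟩ with hxdef
      have hx : (x : ℕ) + 1 ∈ S.erase (mn S) := by
        show mn (S.erase (mn S)) - 1 + 1 ∈ _
        rw [Nat.sub_add_cancel hm'1]
        exact mn_mem hene
      obtain ⟨a, ha, hav⟩ := dec_spec S x hx
      have hamn : (a : ℕ) = mn S := by
        rw [hav]; show mn (S.erase (mn S)) - 1 + 1 + mn S - mn (S.erase (mn S)) = mn S
        omega
      rw [imgN]
      exact Finset.mem_image.mpr ⟨a, mem_filter.mpr ⟨mem_univ _, ⟨x, ha⟩⟩, hamn⟩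
    · intro b hb
      obtain ⟨c, hcm, rfl⟩ := Finset.mem_image.mp hb
      obtain ⟨y, hy⟩ := (mem_filter.mp hcm).2
      obtain ⟨hy1, hy2⟩ := dec_val hy
      have := mn_le hy1
      omega
  rw [enc, himgN, hdmN, Finset.insert_erase hmem]

end Backward

end FProof

theorem F_eq_choose (n p : ℕ) (h1 : 1 ≤ p) (hpn : p ≤ n) :
    F n p = (n + 1).choose (p + 1) := by
  classical
  have e : {f : Fin n → Option (Fin n) //
      IsPIso f ∧ IsOrderPreserving f ∧ IsDecreasing f ∧ imgCard f = p} ≃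
      {S : Finset ℕ // S ∈ Finset.powersetCard (p + 1) (Finset.range (n + 1))} :=
    { toFun := fun f => ⟨FProof.enc f.1,
        FProof.enc_mem f.2.1 f.2.2.1 f.2.2.2.1 f.2.2.2.2 h1⟩
      invFun := fun S => ⟨FProof.dec n S.1, FProof.dec_props S.2 h1 hpn⟩
      left_inv := fun f => Subtype.ext
        (FProof.round1 f.2.1 f.2.2.1 f.2.2.2.1 f.2.2.2.2 h1)
      right_inv := fun S => Subtype.ext (FProof.round2 S.2 h1 hpn) }
  rw [F, Nat.card_congr e, Nat.card_eq_fintype_card, Fintype.card_coe,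
    Finset.card_powersetCard, Finset.card_range]
end

section
/- The total number of order-preserving order-decreasing partial isometries of {1,...,n} equals 2^{n+1} − (n+1). -/
namespace CardODDPAux

variable {n : ℕ}

/-- minimum of a finset of `Fin (n+1)` (top for ∅). -/
noncomputable def minv (E : Finset (Fin (n+1))) : ℕ := ((E.inf id : Fin (n+1)) : ℕ)

lemma minv_le {E : Finset (Fin (n+1))} {e : Fin (n+1)} (he : e ∈ E) :
    minv E ≤ (e : ℕ) := Fin.le_iff_val_le_val.mp (Finset.inf_le (f := id) he)

lemma exists_minv {E : Finset (Fin (n+1))} (h : E.Nonempty) :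
    ∃ e ∈ E, (e : ℕ) = minv E := by
  obtain ⟨e, he, hval⟩ := Finset.exists_mem_eq_inf E h id
  exact ⟨e, he, by simp [minv, hval]⟩

/-- the partial map encoded by a finset `E ⊆ Fin (n+1)`. -/
noncomputable def mkF (E : Finset (Fin (n+1))) : Fin n → Option (Fin n) :=
  fun x =>
    if (∃ e ∈ E, (e : ℕ) = (x : ℕ) + 1) ∧ minv E ≤ (x : ℕ) ∧ E.Nonempty then
      some ⟨(x : ℕ) - minv E, Nat.lt_of_le_of_lt (Nat.sub_le _ _) x.isLt⟩
    else none

lemma mkF_eq_some_iff {E : Finset (Fin (n+1))} {x a : Fin n} :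
    mkF E x = some a ↔
      ((∃ e ∈ E, (e : ℕ) = (x : ℕ) + 1) ∧ minv E ≤ (x : ℕ) ∧ E.Nonempty) ∧
        (a : ℕ) = (x : ℕ) - minv E := by
  unfold mkF
  split
  · rename_i h
    simp only [Option.some.injEq, Fin.ext_iff]
    exact ⟨fun hv => ⟨h, hv.symm⟩, fun hv => hv.2.symm⟩
  · rename_i h
    simp [h]

end CardODDPAux

namespace CardODDPAux

lemma mkF_props (E : Finset (Fin (n+1))) :
    (∀ x y a, mkF E x = some a → mkF E y = some a → x = y) ∧
    (∀ x y a b, mkF E x = some a → mkF E y = some b →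
      ((x : ℤ) - (y : ℤ)).natAbs = ((a : ℤ) - (b : ℤ)).natAbs) ∧
    (∀ x y a b, mkF E x = some a → mkF E y = some b → x ≤ y → a ≤ b) ∧
    (∀ x a, mkF E x = some a → (a : ℕ) ≤ (x : ℕ)) := by
  refine ⟨?_, ?_, ?_, ?_⟩
  · intro x y a hx hy
    obtain ⟨⟨-, hmx, -⟩, hax⟩ := mkF_eq_some_iff.mp hx
    obtain ⟨⟨-, hmy, -⟩, hay⟩ := mkF_eq_some_iff.mp hy
    exact Fin.ext (by omega)
  · intro x y a b hx hy
    obtain ⟨⟨-, hmx, -⟩, hax⟩ := mkF_eq_some_iff.mp hx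
    obtain ⟨⟨-, hmy, -⟩, hay⟩ := mkF_eq_some_iff.mp hy
    omega
  · intro x y a b hx hy hxy
    obtain ⟨⟨-, hmx, -⟩, hax⟩ := mkF_eq_some_iff.mp hx
    obtain ⟨⟨-, hmy, -⟩, hay⟩ := mkF_eq_some_iff.mp hy
    rw [Fin.le_iff_val_le_val] at hxy ⊢
    omega
  · intro x a hx
    obtain ⟨-, hax⟩ := mkF_eq_some_iff.mp hx
    omega

end CardODDPAux

namespace CardODDPAux

lemma mem_iff_of_card_ne_one {E : Finset (Fin (n+1))} (hE : E.card ≠ 1) (e : Fin (n+1)) :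
    e ∈ E ↔ (∃ x a, mkF E x = some a ∧ (e : ℕ) = (x : ℕ) - (a : ℕ)) ∨
            (∃ x a, mkF E x = some a ∧ (e : ℕ) = (x : ℕ) + 1) := by
  constructor
  · intro he
    have hne : E.Nonempty := ⟨e, he⟩
    have hcard : 1 < E.card := by
      have := Finset.card_pos.mpr hne
      omega
    obtain ⟨emin, hememE, hemin⟩ := exists_minv hne
    -- an element different from the minimum
    obtain ⟨e₀, he₀E, he₀ne⟩ := Finset.exists_mem_ne hcard emin
    have he₀gt : minv E < (e₀ : ℕ) := by
      have h1 := minv_le he₀E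
      rcases h1.lt_or_eq with h | h
      · exact h
      · exact absurd (Fin.ext (by omega)) he₀ne
    rcases Nat.eq_or_lt_of_le (minv_le he) with hemineq | hegt
    · -- e is the minimum; use e₀ to build a domain point
      left
      have hlt : (e₀ : ℕ) - 1 < n := by have := e₀.isLt; omega
      set x : Fin n := ⟨(e₀ : ℕ) - 1, hlt⟩ with hx
      have hcond : ((∃ e' ∈ E, (e' : ℕ) = (x : ℕ) + 1) ∧ minv E ≤ (x : ℕ) ∧ E.Nonempty) :=
        ⟨⟨e₀, he₀E, by simp [hx]; omega⟩, by simp [hx]; omega, hne⟩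
      refine ⟨x, ⟨(x : ℕ) - minv E, Nat.lt_of_le_of_lt (Nat.sub_le _ _) x.isLt⟩,
        mkF_eq_some_iff.mpr ⟨hcond, rfl⟩, ?_⟩
      simp [hx]
      omega
    · -- e is above the minimum: it encodes a domain point
      right
      have hlt : (e : ℕ) - 1 < n := by have := e.isLt; omega
      set x : Fin n := ⟨(e : ℕ) - 1, hlt⟩ with hx
      have hcond : ((∃ e' ∈ E, (e' : ℕ) = (x : ℕ) + 1) ∧ minv E ≤ (x : ℕ) ∧ E.Nonempty) :=
        ⟨⟨e, he, by simp [hx]; omega⟩, by simp [hx]; omega, hne⟩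
      refine ⟨x, ⟨(x : ℕ) - minv E, Nat.lt_of_le_of_lt (Nat.sub_le _ _) x.isLt⟩,
        mkF_eq_some_iff.mpr ⟨hcond, rfl⟩, by simp [hx]; omega⟩
  · rintro (⟨x, a, hxa, hev⟩ | ⟨x, a, hxa, hev⟩)
    · obtain ⟨⟨-, hm, hne⟩, ha⟩ := mkF_eq_some_iff.mp hxa
      obtain ⟨emin, hememE, hemin⟩ := exists_minv hne
      have : e = emin := Fin.ext (by omega)
      rwa [this]
    · obtain ⟨⟨⟨e', he'E, he'v⟩, -, -⟩, -⟩ := mkF_eq_some_iff.mp hxa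
      have : e = e' := Fin.ext (by omega)
      rwa [this]

lemma mkF_injOn {E E' : Finset (Fin (n+1))} (hE : E.card ≠ 1) (hE' : E'.card ≠ 1)
    (h : mkF E = mkF E') : E = E' := by
  ext e
  rw [mem_iff_of_card_ne_one hE, mem_iff_of_card_ne_one hE', h]

end CardODDPAux

namespace CardODDPAux

lemma exists_mkF (f : Fin n → Option (Fin n))
    (hiso : ∀ x y a b, f x = some a → f y = some b →
      ((x : ℤ) - (y : ℤ)).natAbs = ((a : ℤ) - (b : ℤ)).natAbs)
    (hOP : ∀ x y a b, f x = some a → f y = some b → x ≤ y → a ≤ b)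
    (hD : ∀ x a, f x = some a → (a : ℕ) ≤ (x : ℕ)) :
    ∃ E : Finset (Fin (n+1)), E.card ≠ 1 ∧ mkF E = f := by
  by_cases h : ∀ x, f x = none
  · refine ⟨∅, by simp, funext fun x => ?_⟩
    rw [h x]
    cases hg : mkF (∅ : Finset (Fin (n+1))) x with
    | none => rfl
    | some b =>
      obtain ⟨⟨-, -, hne⟩, -⟩ := mkF_eq_some_iff.mp hg
      exact absurd hne (by simp)
  · push_neg at h
    obtain ⟨x₀, hx₀⟩ := h
    obtain ⟨a₀, h₀⟩ := Option.ne_none_iff_exists'.mp hx₀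
    have hconst : ∀ x a, f x = some a → (a : ℕ) ≤ (x : ℕ) ∧
        (x : ℕ) - (a : ℕ) = (x₀ : ℕ) - (a₀ : ℕ) := by
      intro x a hx
      have hd := hD x a hx
      have hd0 := hD x₀ a₀ h₀
      rcases le_total x x₀ with hle | hle
      · have h1 := hiso x x₀ a a₀ hx h₀
        have h2 := hOP x x₀ a a₀ hx h₀ hle
        rw [Fin.le_iff_val_le_val] at hle h2
        refine ⟨hd, ?_⟩
        omega
      · have h1 := hiso x₀ x a₀ a h₀ hx
        have h2 := hOP x₀ x a₀ a h₀ hx hle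
        rw [Fin.le_iff_val_le_val] at hle h2
        refine ⟨hd, ?_⟩
        omega
    have hd0 := hD x₀ a₀ h₀
    set c : ℕ := (x₀ : ℕ) - (a₀ : ℕ) with hc
    have hclt : c < n + 1 := by have := x₀.isLt; omega
    set cF : Fin (n+1) := ⟨c, hclt⟩ with hcF
    set D : Finset (Fin n) := Finset.univ.filter (fun x => f x ≠ none) with hDdef
    set E : Finset (Fin (n+1)) :=
      insert cF (D.image (fun (x : Fin n) => (⟨(x : ℕ) + 1, by have := x.isLt; omega⟩ : Fin (n+1)))) with hE
    have hcmem : cF ∈ E := Finset.mem_insert_self _ _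
    have hne : E.Nonempty := ⟨cF, hcmem⟩
    have hEelems : ∀ e ∈ E, e = cF ∨ ∃ x a, f x = some a ∧ (e : ℕ) = (x : ℕ) + 1 := by
      intro e he
      rcases Finset.mem_insert.mp he with h' | h'
      · exact Or.inl h'
      · obtain ⟨x, hxD, hxe⟩ := Finset.mem_image.mp h'
        have hxne : f x ≠ none := (Finset.mem_filter.mp hxD).2
        obtain ⟨a, ha⟩ := Option.ne_none_iff_exists'.mp hxne
        exact Or.inr ⟨x, a, ha, by rw [← hxe]⟩
    have hminv : minv E = c := by
      have h1 : minv E ≤ c := minv_le hcmem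
      have h2 : c ≤ minv E := by
        obtain ⟨emin, heminE, hemin⟩ := exists_minv hne
        rcases hEelems emin heminE with h' | ⟨x, a, ha, hev⟩
        · rw [← hemin, h']
        · obtain ⟨hax, hdiff⟩ := hconst x a ha
          omega
      omega
    have hsucc_mem : ∀ (x : Fin n) (a : Fin n), f x = some a →
        (⟨(x : ℕ) + 1, by have := x.isLt; omega⟩ : Fin (n+1)) ∈ E := by
      intro x a ha
      refine Finset.mem_insert_of_mem (Finset.mem_image.mpr ⟨x, ?_, rfl⟩)
      simp [hDdef, ha]
    refine ⟨E, ?_, funext fun x => ?_⟩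
    · have : 1 < E.card := by
        refine Finset.one_lt_card.mpr ⟨cF, hcmem, _, hsucc_mem x₀ a₀ h₀, ?_⟩
        intro heq
        rw [Fin.ext_iff] at heq
        have hv : c = (x₀ : ℕ) + 1 := heq
        omega
      omega
    · cases hfx : f x with
      | some a =>
        obtain ⟨hax, hdiff⟩ := hconst x a hfx
        refine mkF_eq_some_iff.mpr ⟨⟨⟨_, hsucc_mem x a hfx, rfl⟩, ?_, hne⟩, ?_⟩
        · omega
        · omega
      | none =>
        cases hg : mkF E x with
        | none => rfl
        | some b =>
          exfalso
          obtain ⟨⟨⟨e, heE, hev⟩, hm, -⟩, -⟩ := mkF_eq_some_iff.mp hg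
          rcases hEelems e heE with h' | ⟨y, a, ha, hev'⟩
          · rw [h'] at hev
            have hv : c = (x : ℕ) + 1 := hev
            omega
          · have : y = x := Fin.ext (by omega)
            rw [this, hfx] at ha
            cases ha

end CardODDPAux

theorem card_ODDP (n : ℕ) :
    Nat.card {f : Fin n → Option (Fin n) //
      IsPIso f ∧ IsOrderPreserving f ∧ IsDecreasing f} = 2 ^ (n + 1) - (n + 1) := by
  classical
  have hbij : Function.Bijective
      (fun E : {E : Finset (Fin (n+1)) // E.card ≠ 1} =>
        (⟨CardODDPAux.mkF E.1, by
          obtain ⟨h1, h2, h3, h4⟩ := CardODDPAux.mkF_props E.1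
          exact ⟨⟨h1, h2⟩, h3, h4⟩⟩ :
          {f : Fin n → Option (Fin n) //
            IsPIso f ∧ IsOrderPreserving f ∧ IsDecreasing f})) := by
    constructor
    · intro E E' h
      exact Subtype.ext (CardODDPAux.mkF_injOn E.2 E'.2 (congrArg Subtype.val h))
    · rintro ⟨f, ⟨⟨hi1, hi2⟩, hop, hd⟩⟩
      obtain ⟨E, hE, hEf⟩ := CardODDPAux.exists_mkF f hi2 hop hd
      exact ⟨⟨E, hE⟩, Subtype.ext hEf⟩
  rw [← Nat.card_congr (Equiv.ofBijective _ hbij)]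
  rw [Nat.card_eq_fintype_card]
  have h1 : Fintype.card {E : Finset (Fin (n+1)) // E.card ≠ 1} =
      Fintype.card (Finset (Fin (n+1))) -
        Fintype.card {E : Finset (Fin (n+1)) // E.card = 1} :=
    Fintype.card_subtype_compl _
  have h2 : Fintype.card {E : Finset (Fin (n+1)) // E.card = 1} = n + 1 := by
    rw [Fintype.card_subtype]
    have : Finset.univ.filter (fun E : Finset (Fin (n+1)) => E.card = 1) =
        Finset.univ.powersetCard 1 := by
      ext E
      simp [Finset.mem_powersetCard]
    rw [this, Finset.card_powersetCard]
    simp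
  rw [h1, h2, Fintype.card_finset, Fintype.card_fin]
end

section
/- For n ≥ m ≥ 1, the number of order-preserving order-decreasing partial isometries of {1,...,n} with exactly m fixed points equals C(n, m). -/
private lemma partial_id {n : ℕ} {f : Fin n → Option (Fin n)} (hf : IsPIso f)
    (hop : IsOrderPreserving f) (hdec : IsDecreasing f)
    {x₀ : Fin n} (hx₀ : f x₀ = some x₀) :
    ∀ x a, f x = some a → a = x := by
  intro x a hx
  have hiso := hf.2 x x₀ a x₀ hx hx₀
  have hd := hdec x a hx
  rcases le_total x x₀ with h | h
  · have h'' : (a : ℕ) ≤ (x₀ : ℕ) := hop x x₀ a x₀ hx hx₀ h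
    have h' : (x : ℕ) ≤ (x₀ : ℕ) := h
    exact Fin.ext (by omega)
  · have h'' : (x₀ : ℕ) ≤ (a : ℕ) := hop x₀ x x₀ a hx₀ hx h
    have h' : (x₀ : ℕ) ≤ (x : ℕ) := h
    exact Fin.ext (by omega)

private def pidMap {n : ℕ} (s : Finset (Fin n)) : Fin n → Option (Fin n) :=
  fun x => if x ∈ s then some x else none

private lemma pid_fix {n : ℕ} (s : Finset (Fin n)) :
    (Finset.univ.filter fun x => pidMap s x = some x) = s := by
  ext x
  simp only [Finset.mem_filter, Finset.mem_univ, true_and, pidMap]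
  constructor
  · intro h; by_contra hx; simp [hx] at h
  · intro h; simp [h]

private def oddpEquiv (n m : ℕ) (h1 : 1 ≤ m) :
    {f : Fin n → Option (Fin n) //
      IsPIso f ∧ IsOrderPreserving f ∧ IsDecreasing f ∧ fixCard f = m} ≃
    {s : Finset (Fin n) // s.card = m} where
  toFun f := ⟨Finset.univ.filter fun x => f.1 x = some x, f.2.2.2.2⟩
  invFun s := ⟨pidMap s.1, by
    refine ⟨⟨?_, ?_⟩, ?_, ?_, ?_⟩
    · intro x y a hx hy
      unfold pidMap at hx hy
      split at hx <;> split at hy <;> simp_all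
    · intro x y a b hx hy
      unfold pidMap at hx hy
      split at hx <;> split at hy <;> simp_all
    · intro x y a b hx hy hxy
      unfold pidMap at hx hy
      split at hx <;> split at hy <;> simp_all
    · intro x a hx
      unfold pidMap at hx
      split at hx <;> simp_all
    · show (Finset.univ.filter fun x => pidMap s.1 x = some x).card = m
      rw [pid_fix]; exact s.2⟩
  left_inv f := by
    obtain ⟨f, hp, hop, hdec, hfix⟩ := f
    ext1
    have hne : (Finset.univ.filter fun x => f x = some x).Nonempty := by
      rw [← Finset.card_pos]
      show 0 < fixCard f
      omega
    obtain ⟨x₀, hx₀⟩ := hne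
    rw [Finset.mem_filter] at hx₀
    have key := partial_id hp hop hdec hx₀.2
    funext x
    show pidMap _ x = f x
    unfold pidMap
    simp only [Finset.mem_filter, Finset.mem_univ, true_and]
    split
    · next h => exact h.symm
    · next h =>
      cases hfx : f x with
      | none => rfl
      | some a => exact absurd (key x a hfx ▸ hfx) h
  right_inv s := by
    ext1
    exact pid_fix s.1

theorem card_ODDP_fix (n m : ℕ) (h1 : 1 ≤ m) (hmn : m ≤ n) :
    Nat.card {f : Fin n → Option (Fin n) //
      IsPIso f ∧ IsOrderPreserving f ∧ IsDecreasing f ∧ fixCard f = m} =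
      n.choose m := by
  rw [Nat.card_congr (oddpEquiv n m h1), Nat.card_eq_fintype_card,
    Fintype.card_finset_len, Fintype.card_fin]
end

section
/- Let α be an order-decreasing partial isometry of {1,...,n} with 1 < i < n, whose set of fixed points is exactly {i}. Then x + xα = 2i for all x ∈ Dom α. -/
theorem sum_eq_two_fixed_point {n : ℕ} (f : Fin n → Option (Fin n))
    (hf : IsPIso f) (hd : IsDecreasing f) (i : Fin n)
    (hi1 : 0 < (i : ℕ)) (hi2 : (i : ℕ) < n - 1)
    (hfix : f i = some i) (huniq : ∀ x, f x = some x → x = i) :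
    ∀ x a, f x = some a → (x : ℕ) + (a : ℕ) = 2 * (i : ℕ) := by
  intro x a hx
  have h := hf.2 x i a i hx hfix
  have hcase : (a : ℕ) = (x : ℕ) ∨ (x : ℕ) + (a : ℕ) = 2 * (i : ℕ) := by omega
  rcases hcase with h1 | h1
  · have hax : a = x := Fin.ext h1
    rw [hax] at hx
    have hxi : (x : ℕ) = (i : ℕ) := congrArg Fin.val (huniq x hx)
    omega
  · exact h1
end

section
/- For even n = 2a, the number of order-decreasing partial isometries of {1,...,n} with exactly one fixed point equals 2^{a+1} − 2; for odd n = 2a−1 it equals 3·2^{a−1} − 2. -/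
/-- the number of order-decreasing partial isometries of the chain `Fin n`
with exactly one fixed point. -/
noncomputable def DDPfixOne (n : ℕ) : ℕ :=
  Nat.card {f : Fin n → Option (Fin n) // IsPIso f ∧ IsDecreasing f ∧ fixCard f = 1}

namespace DDPaux

open Finset

/-- upper endpoint of the allowed domain for the reflection about `m`. -/
def Mm {n : ℕ} (m : Fin n) : Fin n :=
  ⟨min (2 * m.val) (n - 1), lt_of_le_of_lt (min_le_right _ _) (Nat.sub_lt m.pos one_pos)⟩

/-- the reflection about `p.1` with domain `{p.1} ∪ p.2`. -/
def Ff {n : ℕ} (p : (_ : Fin n) × Finset (Fin n)) : Fin n → Option (Fin n) :=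
  fun x => if x = p.1 ∨ x ∈ p.2 then
    some ⟨min (2 * p.1.val - x.val) p.1.val, lt_of_le_of_lt (min_le_right _ _) p.1.isLt⟩
  else none

/-- the parameter set. -/
def Tt (n : ℕ) : Finset ((_ : Fin n) × Finset (Fin n)) :=
  univ.sigma fun m => (Finset.Ioc m (Mm m)).powerset

lemma mem_Tt {n : ℕ} (p : (_ : Fin n) × Finset (Fin n)) :
    p ∈ Tt n ↔ p.2 ⊆ Finset.Ioc p.1 (Mm p.1) := by
  cases p
  simp [Tt, Finset.mem_sigma]

lemma cond_bounds {n : ℕ} {p : (_ : Fin n) × Finset (Fin n)} (hp : p ∈ Tt n)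
    {x : Fin n} (hx : x = p.1 ∨ x ∈ p.2) :
    p.1.val ≤ x.val ∧ x.val ≤ 2 * p.1.val := by
  rcases hx with rfl | hx
  · omega
  · have := (mem_Tt p).1 hp hx
    rw [Finset.mem_Ioc] at this
    have h1 : p.1 < x := this.1
    have h2 : x ≤ Mm p.1 := this.2
    rw [Fin.lt_def] at h1
    rw [Fin.le_def] at h2
    simp only [Mm] at h2
    omega

lemma Ff_apply_mem {n : ℕ} {p : (_ : Fin n) × Finset (Fin n)}
    {x : Fin n} (hx : x = p.1 ∨ x ∈ p.2) :
    ∃ y : Fin n, Ff p x = some y ∧ y.val = min (2 * p.1.val - x.val) p.1.val := by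
  simp only [Ff, if_pos hx]
  exact ⟨_, rfl, rfl⟩

lemma Ff_apply_of_some {n : ℕ} {p : (_ : Fin n) × Finset (Fin n)}
    {x y : Fin n} (h : Ff p x = some y) :
    (x = p.1 ∨ x ∈ p.2) ∧ y.val = min (2 * p.1.val - x.val) p.1.val := by
  by_cases hx : x = p.1 ∨ x ∈ p.2
  · refine ⟨hx, ?_⟩
    simp only [Ff, if_pos hx] at h
    exact (congrArg Fin.val (Option.some_injective _ h)).symm
  · simp only [Ff, if_neg hx] at h
    exact absurd h (by simp)

lemma Ff_fix {n : ℕ} {p : (_ : Fin n) × Finset (Fin n)} (hp : p ∈ Tt n) (x : Fin n) :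
    Ff p x = some x ↔ x = p.1 := by
  constructor
  · intro h
    obtain ⟨hx, hy⟩ := Ff_apply_of_some h
    have hb := cond_bounds hp hx
    have : x.val = p.1.val := by omega
    exact Fin.ext this
  · rintro rfl
    obtain ⟨y, hy, hv⟩ := Ff_apply_mem (p := p) (Or.inl rfl)
    have : y = p.1 := Fin.ext (by omega)
    rw [this] at hy
    exact hy

lemma Ff_props {n : ℕ} {p : (_ : Fin n) × Finset (Fin n)} (hp : p ∈ Tt n) :
    IsPIso (Ff p) ∧ IsDecreasing (Ff p) ∧ fixCard (Ff p) = 1 := by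
  refine ⟨⟨?_, ?_⟩, ?_, ?_⟩
  · intro x y c hx hy
    obtain ⟨hx1, hx2⟩ := Ff_apply_of_some hx
    obtain ⟨hy1, hy2⟩ := Ff_apply_of_some hy
    have bx := cond_bounds hp hx1
    have by' := cond_bounds hp hy1
    exact Fin.ext (by omega)
  · intro x y c d hx hy
    obtain ⟨hx1, hx2⟩ := Ff_apply_of_some hx
    obtain ⟨hy1, hy2⟩ := Ff_apply_of_some hy
    have bx := cond_bounds hp hx1
    have by' := cond_bounds hp hy1
    have hc : (c.val : ℤ) = 2 * p.1.val - x.val := by omega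
    have hd : (d.val : ℤ) = 2 * p.1.val - y.val := by omega
    omega
  · intro x c hx
    obtain ⟨hx1, hx2⟩ := Ff_apply_of_some hx
    have bx := cond_bounds hp hx1
    omega
  · rw [fixCard]
    have : (univ.filter fun x => Ff p x = some x) = {p.1} := by
      ext x
      simp [Ff_fix hp]
    rw [this, card_singleton]

lemma Ff_injOn (n : ℕ) : Set.InjOn (Ff (n := n)) (Tt n) := by
  intro p hp q hq hpq
  have hm : p.1 = q.1 := by
    have h1 : Ff p p.1 = some p.1 := (Ff_fix hp p.1).2 rfl
    rw [hpq] at h1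
    exact (Ff_fix hq p.1).1 h1
  have hs : p.2 = q.2 := by
    ext x
    constructor
    · intro hx
      obtain ⟨y, hy, _⟩ := Ff_apply_mem (p := p) (Or.inr hx)
      rw [hpq] at hy
      obtain ⟨hc, _⟩ := Ff_apply_of_some hy
      rcases hc with rfl | hc
      · exfalso
        have := (mem_Tt p).1 hp hx
        rw [Finset.mem_Ioc] at this
        exact absurd (hm ▸ this.1) (lt_irrefl _)
      · exact hc
    · intro hx
      obtain ⟨y, hy, _⟩ := Ff_apply_mem (p := q) (Or.inr hx)
      rw [← hpq] at hy
      obtain ⟨hc, _⟩ := Ff_apply_of_some hy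
      rcases hc with rfl | hc
      · exfalso
        have := (mem_Tt q).1 hq hx
        rw [Finset.mem_Ioc] at this
        exact absurd (hm ▸ this.1) (lt_irrefl _)
      · exact hc
  cases p; cases q
  simp_all

lemma classify {n : ℕ} (f : Fin n → Option (Fin n))
    (hf : IsPIso f ∧ IsDecreasing f ∧ fixCard f = 1) :
    ∃ p ∈ Tt n, Ff p = f := by
  obtain ⟨⟨hinj, hiso⟩, hdec, hfix⟩ := hf
  rw [fixCard, Finset.card_eq_one] at hfix
  obtain ⟨m, hm⟩ := hfix
  have hmf : f m = some m := by
    have : m ∈ univ.filter fun x => f x = some x := hm ▸ mem_singleton_self m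
    exact (mem_filter.1 this).2
  have huniq : ∀ x : Fin n, f x = some x → x = m := by
    intro x hx
    have : x ∈ univ.filter fun x => f x = some x := mem_filter.2 ⟨mem_univ _, hx⟩
    rw [hm, mem_singleton] at this
    exact this
  classical
  -- the key pointwise description
  have key : ∀ x y : Fin n, f x = some y →
      m.val ≤ x.val ∧ x.val ≤ 2 * m.val ∧ y.val = 2 * m.val - x.val := by
    intro x y hxy
    have hd := hdec x y hxy
    have hi := hiso x m y m hxy hmf
    by_cases hxm : x = m
    · have hxv : x.val = m.val := congrArg Fin.val hxm
      have hym : y.val = m.val := by omega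
      omega
    · have hyx : y ≠ x := fun h => hxm (huniq x (h ▸ hxy))
      have : y.val < x.val := lt_of_le_of_ne hd (fun h => hyx (Fin.ext h))
      -- from |x - m| = |y - m| and y < x : x + y = 2m
      have hsum : x.val + y.val = 2 * m.val := by omega
      omega
  set S : Finset (Fin n) := univ.filter fun x => x ≠ m ∧ (f x).isSome with hS
  refine ⟨⟨m, S⟩, ?_, ?_⟩
  · rw [mem_Tt]
    dsimp only
    intro x hx
    simp only [hS, mem_filter, mem_univ, true_and] at hx
    obtain ⟨hxm, hsome⟩ := hx
    obtain ⟨y, hy⟩ := Option.isSome_iff_exists.1 hsome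
    have hk := key x y hy
    have hxn := x.isLt
    rw [Finset.mem_Ioc]
    constructor
    · rw [Fin.lt_def]
      have : m.val ≠ x.val := fun h => hxm (Fin.ext h.symm)
      omega
    · rw [Fin.le_def]
      simp only [Mm]
      omega
  · funext x
    have hproj1 : (⟨m, S⟩ : (_ : Fin n) × Finset (Fin n)).1 = m := rfl
    have hproj2 : (⟨m, S⟩ : (_ : Fin n) × Finset (Fin n)).2 = S := rfl
    by_cases hc : x = m ∨ x ∈ S
    · obtain ⟨y, hy, hv⟩ := Ff_apply_mem (p := ⟨m, S⟩) (by rw [hproj1, hproj2]; exact hc)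
      rw [hproj1] at hv
      rw [hy]
      rcases hc with h | hc
      · rw [h, hmf]
        refine congrArg some (Fin.ext ?_).symm
        rw [h] at hv
        omega
      · simp only [hS, mem_filter, mem_univ, true_and] at hc
        obtain ⟨y', hy'⟩ := Option.isSome_iff_exists.1 hc.2
        have hk := key x y' hy'
        rw [hy']
        exact congrArg some (Fin.ext (by omega)).symm
    · rw [Ff, if_neg (by rw [hproj1, hproj2]; exact hc)]
      push_neg at hc
      obtain ⟨hxm, hxS⟩ := hc
      have hns : ¬ (f x).isSome := by
        intro hsome
        exact hxS (by simp [hS, hxm, hsome])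
      exact (Option.not_isSome_iff_eq_none.1 hns).symm

lemma card_Tt (n : ℕ) : (Tt n).card = ∑ m ∈ Finset.range n, 2 ^ (min m (n - 1 - m)) := by
  rw [Tt, Finset.card_sigma, ← Fin.sum_univ_eq_sum_range (fun m => 2 ^ (min m (n - 1 - m))) n]
  refine Finset.sum_congr rfl ?_
  intro m _
  rw [Finset.card_powerset, Fin.card_Ioc]
  congr 1
  simp only [Mm]
  omega

lemma DDPfixOne_eq (n : ℕ) : DDPfixOne n = (Tt n).card := by
  classical
  rw [DDPfixOne]
  have e : {f : Fin n → Option (Fin n) // IsPIso f ∧ IsDecreasing f ∧ fixCard f = 1} ≃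
      {f // f ∈ (Tt n).image Ff} := by
    refine Equiv.subtypeEquivRight fun f => ?_
    rw [Finset.mem_image]
    constructor
    · intro hf
      exact classify f hf
    · rintro ⟨p, hp, rfl⟩
      exact Ff_props hp
  rw [Nat.card_congr e, Nat.card_eq_finsetCard, Finset.card_image_of_injOn (Ff_injOn n)]

lemma srec (n : ℕ) :
    ∑ m ∈ Finset.range (n + 2), 2 ^ (min m (n + 2 - 1 - m)) =
      2 * (∑ m ∈ Finset.range n, 2 ^ (min m (n - 1 - m))) + 2 := by
  rw [Finset.sum_range_succ, Finset.sum_range_succ']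
  have hcongr : ∀ i ∈ Finset.range n,
      2 ^ (min (i + 1) (n + 2 - 1 - (i + 1))) = 2 * 2 ^ (min i (n - 1 - i)) := by
    intro i hi
    rw [Finset.mem_range] at hi
    have h : min (i + 1) (n + 2 - 1 - (i + 1)) = min i (n - 1 - i) + 1 := by omega
    rw [h, pow_succ]
    ring
  rw [Finset.sum_congr rfl hcongr, ← Finset.mul_sum]
  have h0 : (0 : ℕ) ⊓ (n + 2 - 1 - 0) = 0 := by omega
  have hl : (n + 1) ⊓ (n + 2 - 1 - (n + 1)) = 0 := by omega
  rw [h0, hl, pow_zero]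
  omega

lemma seven (a : ℕ) (ha : 1 ≤ a) :
    ∑ m ∈ Finset.range (2 * a), 2 ^ (min m (2 * a - 1 - m)) = 2 ^ (a + 1) - 2 := by
  induction a, ha using Nat.le_induction with
  | base => decide
  | succ a ha ih =>
    have h2 : 2 * (a + 1) = 2 * a + 2 := by ring
    rw [h2, srec, ih]
    have hp : 2 ≤ 2 ^ (a + 1) := by
      calc 2 = 2 ^ 1 := rfl
      _ ≤ 2 ^ (a + 1) := Nat.pow_le_pow_right (by norm_num) (by omega)
    have hs : 2 ^ (a + 1 + 1) = 2 * 2 ^ (a + 1) := by ring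
    omega

lemma sodd (a : ℕ) (ha : 1 ≤ a) :
    ∑ m ∈ Finset.range (2 * a - 1), 2 ^ (min m (2 * a - 1 - 1 - m)) = 3 * 2 ^ (a - 1) - 2 := by
  induction a, ha using Nat.le_induction with
  | base => decide
  | succ a ha ih =>
    have h2 : 2 * (a + 1) - 1 = (2 * a - 1) + 2 := by omega
    have h3 : ∀ m, 2 * (a + 1) - 1 - 1 - m = (2 * a - 1) + 2 - 1 - m := by omega
    simp only [h2, h3]
    rw [srec]
    have h4 : ∀ m, 2 * a - 1 - 1 - m = (2 * a - 1) - 1 - m := fun m => rfl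
    rw [ih]
    have hp : 1 ≤ 2 ^ (a - 1) := Nat.one_le_two_pow
    have hs : 2 ^ (a + 1 - 1) = 2 * 2 ^ (a - 1) := by
      have : a + 1 - 1 = (a - 1) + 1 := by omega
      rw [this, pow_succ]; ring
    omega

end DDPaux

theorem card_DDP_one_fixed_point (a : ℕ) (ha : 1 ≤ a) :
    DDPfixOne (2 * a) = 2 ^ (a + 1) - 2 ∧
      DDPfixOne (2 * a - 1) = 3 * 2 ^ (a - 1) - 2 := by
  constructor
  · rw [DDPaux.DDPfixOne_eq, DDPaux.card_Tt]
    exact DDPaux.seven a ha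
  · rw [DDPaux.DDPfixOne_eq, DDPaux.card_Tt]
    exact DDPaux.sodd a ha
end

section
/- Let U be the set of order-decreasing injective partial functions on {1,...,n} forming DDP_n (order-decreasing partial isometries). Then the number of elements of DDP_n with no fixed points equals |DDP_{n−1}|, the total number of order-decreasing partial isometries of {1,...,n−1}. -/
/-- Shift a map on `Fin n` down to a map on `Fin (n-1)`. -/
def ddpF (n : ℕ) (f : Fin n → Option (Fin n)) : Fin (n - 1) → Option (Fin (n - 1)) :=
  fun x => (f ⟨x + 1, by have := x.isLt; omega⟩).bind
    fun a => if h : (a : ℕ) < n - 1 then some ⟨a, h⟩ else none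

/-- Shift a map on `Fin (n-1)` up to a map on `Fin n`. -/
def ddpG (n : ℕ) (g : Fin (n - 1) → Option (Fin (n - 1))) : Fin n → Option (Fin n) :=
  fun x => if h : 1 ≤ (x : ℕ) then
    (g ⟨(x : ℕ) - 1, by have := x.isLt; omega⟩).map
      (fun a : Fin (n - 1) => ⟨a.1, by have := a.isLt; omega⟩)
  else none

lemma fixCard_eq_zero_iff {n : ℕ} (f : Fin n → Option (Fin n)) :
    fixCard f = 0 ↔ ∀ x, f x ≠ some x := by
  simp [fixCard, Finset.card_eq_zero, Finset.filter_eq_empty_iff]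

lemma strict_dec {n : ℕ} {f : Fin n → Option (Fin n)}
    (hd : IsDecreasing f) (hfix : ∀ x, f x ≠ some x)
    {x a : Fin n} (h : f x = some a) : (a : ℕ) < (x : ℕ) := by
  have h1 := hd x a h
  rcases lt_or_eq_of_le h1 with h2 | h2
  · exact h2
  · exact absurd h (by have : a = x := Fin.ext h2; rw [this]; exact hfix x)

lemma ddpF_eq {n : ℕ} {f : Fin n → Option (Fin n)}
    (hd : IsDecreasing f) (hfix : ∀ x, f x ≠ some x)
    {x : Fin (n - 1)} {a : Fin (n - 1)} :
    ddpF n f x = some a ↔ f ⟨x + 1, by have := x.isLt; omega⟩ = some ⟨a, by have := a.isLt; omega⟩ := by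
  unfold ddpF
  constructor
  · intro h
    rcases hb : f ⟨x + 1, by have := x.isLt; omega⟩ with _ | b
    · simp [hb] at h
    · rw [hb] at h
      rw [Option.bind_some] at h
      split at h
      · simp only [Option.some.injEq] at h
        subst h
        rfl
      · exact absurd h (by simp)
  · intro h
    rw [h]
    have hb : (a : ℕ) < n - 1 := a.isLt
    simp [hb]

lemma ddpG_eq {n : ℕ} {g : Fin (n - 1) → Option (Fin (n - 1))}
    {x a : Fin n} :
    ddpG n g x = some a ↔ ∃ (h1 : 1 ≤ (x : ℕ)) (h2 : (a : ℕ) < n - 1),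
      g ⟨(x : ℕ) - 1, by have := x.isLt; omega⟩ = some ⟨a, h2⟩ := by
  unfold ddpG
  constructor
  · intro h
    split at h
    · rename_i h1
      rcases hb : g ⟨(x : ℕ) - 1, by have := x.isLt; omega⟩ with _ | b
      · simp [hb] at h
      · rw [hb] at h
        simp only [Option.map_some, Option.some.injEq] at h
        subst h
        exact ⟨h1, b.isLt, by rw [hb]⟩
    · simp at h
  · rintro ⟨h1, h2, h3⟩
    rw [dif_pos h1, h3]
    rfl

theorem card_DDP_fixfree (n : ℕ) (hn : 1 ≤ n) :
    Nat.card {f : Fin n → Option (Fin n) //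
      IsPIso f ∧ IsDecreasing f ∧ fixCard f = 0} =
      Nat.card {f : Fin (n - 1) → Option (Fin (n - 1)) //
        IsPIso f ∧ IsDecreasing f} := by
  apply Nat.card_congr
  refine ⟨fun ⟨f, hi, hd, hfix⟩ => ⟨ddpF n f, ?_, ?_⟩,
          fun ⟨g, hi, hd⟩ => ⟨ddpG n g, ?_, ?_, ?_⟩, ?_, ?_⟩
  · -- IsPIso (ddpF n f)
    rw [fixCard_eq_zero_iff] at hfix
    constructor
    · intro x y a hx hy
      rw [ddpF_eq hd hfix] at hx hy
      have := hi.1 _ _ _ hx hy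
      have : (x : ℕ) + 1 = (y : ℕ) + 1 := congrArg Fin.val this
      exact Fin.ext (by omega)
    · intro x y a b hx hy
      rw [ddpF_eq hd hfix] at hx hy
      have := hi.2 _ _ _ _ hx hy
      simpa using this
  · -- IsDecreasing (ddpF n f)
    rw [fixCard_eq_zero_iff] at hfix
    intro x a h
    rw [ddpF_eq hd hfix] at h
    have := strict_dec hd hfix h
    simpa using Nat.lt_succ_iff.mp this
  · -- IsPIso (ddpG n g)
    constructor
    · intro x y a hx hy
      rw [ddpG_eq] at hx hy
      obtain ⟨hx1, hx2, hx3⟩ := hx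
      obtain ⟨hy1, hy2, hy3⟩ := hy
      have := hi.1 _ _ _ hx3 hy3
      have : (x : ℕ) - 1 = (y : ℕ) - 1 := congrArg Fin.val this
      exact Fin.ext (by omega)
    · intro x y a b hx hy
      rw [ddpG_eq] at hx hy
      obtain ⟨hx1, hx2, hx3⟩ := hx
      obtain ⟨hy1, hy2, hy3⟩ := hy
      have := hi.2 _ _ _ _ hx3 hy3
      have e1 : ((((x : ℕ) - 1 : ℕ)) : ℤ) = (x : ℕ) - 1 := by
        rw [Nat.cast_sub hx1]; rfl
      have e2 : ((((y : ℕ) - 1 : ℕ)) : ℤ) = (y : ℕ) - 1 := by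
        rw [Nat.cast_sub hy1]; rfl
      rw [e1, e2] at this
      simpa [sub_sub_sub_cancel_right] using this
  · -- IsDecreasing (ddpG n g)
    intro x a h
    rw [ddpG_eq] at h
    obtain ⟨h1, h2, h3⟩ := h
    have : (a : ℕ) ≤ (x : ℕ) - 1 := hd _ _ h3
    omega
  · -- fixCard (ddpG n g) = 0
    rw [fixCard_eq_zero_iff]
    intro x h
    rw [ddpG_eq] at h
    obtain ⟨h1, h2, h3⟩ := h
    have : (x : ℕ) ≤ (x : ℕ) - 1 := hd _ _ h3
    omega
  · -- left inverse
    rintro ⟨f, hi, hd, hfix⟩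
    rw [fixCard_eq_zero_iff] at hfix
    apply Subtype.ext
    funext x
    show ddpG n (ddpF n f) x = f x
    rcases Nat.eq_zero_or_pos (x : ℕ) with h0 | h0
    · have hx : ddpG n (ddpF n f) x = none := by
        unfold ddpG; rw [dif_neg (by omega)]
      rw [hx]
      rcases hf : f x with _ | a
      · rfl
      · exact absurd (strict_dec hd hfix hf) (by omega)
    · rcases hf : f x with _ | a
      · rcases hg : ddpG n (ddpF n f) x with _ | b
        · rfl
        · rw [ddpG_eq] at hg
          obtain ⟨h1, h2, h3⟩ := hg
          rw [ddpF_eq hd hfix] at h3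
          have hxx : (⟨(⟨(x : ℕ) - 1, by have := x.isLt; omega⟩ : Fin (n-1)) + 1,
              by have := x.isLt; omega⟩ : Fin n) = x :=
            Fin.ext (show (x : ℕ) - 1 + 1 = x by omega)
          rw [hxx, hf] at h3
          exact absurd h3 (by simp)
      · have ha := strict_dec hd hfix hf
        rw [ddpG_eq]
        refine ⟨h0, by have := x.isLt; omega, ?_⟩
        rw [ddpF_eq hd hfix]
        have hxx : (⟨(⟨(x : ℕ) - 1, by have := x.isLt; omega⟩ : Fin (n-1)) + 1,
            by have := x.isLt; omega⟩ : Fin n) = x :=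
          Fin.ext (show (x : ℕ) - 1 + 1 = x by omega)
        rw [hxx, hf]
  · -- right inverse
    rintro ⟨g, hi, hd⟩
    apply Subtype.ext
    funext x
    show ddpF n (ddpG n g) x = g x
    have hd' : IsDecreasing (ddpG n g) := by
      intro z c h
      rw [ddpG_eq] at h
      obtain ⟨h1, h2, h3⟩ := h
      have : (c : ℕ) ≤ (z : ℕ) - 1 := hd _ _ h3
      omega
    have hfix' : ∀ z, ddpG n g z ≠ some z := by
      intro z h
      rw [ddpG_eq] at h
      obtain ⟨h1, h2, h3⟩ := h
      have : (z : ℕ) ≤ (z : ℕ) - 1 := hd _ _ h3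
      omega
    rcases hg : g x with _ | a
    · rcases hG : ddpF n (ddpG n g) x with _ | b
      · rfl
      · rw [ddpF_eq hd' hfix', ddpG_eq] at hG
        obtain ⟨h1, h2, h3⟩ := hG
        have hxx2 : (⟨((⟨(x : ℕ) + 1, by have := x.isLt; omega⟩ : Fin n) : ℕ) - 1,
            by have := x.isLt; omega⟩ : Fin (n - 1)) = x :=
          Fin.ext (show (x : ℕ) + 1 - 1 = x by omega)
        rw [hxx2, hg] at h3
        exact absurd h3 (by simp)
    · rw [ddpF_eq hd' hfix', ddpG_eq]
      refine ⟨Nat.succ_le_succ (Nat.zero_le _), a.isLt, ?_⟩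
      have hxx2 : (⟨((⟨(x : ℕ) + 1, by have := x.isLt; omega⟩ : Fin n) : ℕ) - 1,
          by have := x.isLt; omega⟩ : Fin (n - 1)) = x :=
        Fin.ext (show (x : ℕ) + 1 - 1 = x by omega)
      rw [hxx2, hg]
end
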